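/- Fix natural numbers m ≤ r ≤ n. An operator L[f] = Σ_{i=0}^{r} a_i(x)·f^{(i)} with polynomial coefficients maps every polynomial of degree at most n to a polynomial of degree at most n − m if and only if it can be written as L[f] = Σ_{j=0}^{r} p_j(x)·K_{rj}[f] with polynomials p_0, …, p_r of degree at most r − m, and in that case the polynomials p_j are uniquely determined. Consequently, the ℝ-vector space of operators of order at most r mapping P_n into P_{n−m} has dimension (r+1)(r−m+1); in particular, the space of linear differential operators of order at most r with polynomial coefficients mapping P_n into itself has dimension (r+1)². -/

import Mathlib

open Polynomial

/-- The operator `xD : p ↦ x·p'`. -/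
noncomputable def xD : ℝ[X] →ₗ[ℝ] ℝ[X] :=
  (LinearMap.mulLeft ℝ (X : ℝ[X])).comp (Polynomial.derivative : ℝ[X] →ₗ[ℝ] ℝ[X])

/-- The Pochhammer operator `(a − xD)_k = (a − xD)∘((a−1) − xD)∘⋯∘((a−k+1) − xD)`,
the identity when `k = 0`. -/
noncomputable def pochOp (a : ℤ) : ℕ → (ℝ[X] →ₗ[ℝ] ℝ[X])
  | 0 => LinearMap.id
  | k + 1 => ((a : ℝ) • (LinearMap.id : ℝ[X] →ₗ[ℝ] ℝ[X]) - xD).comp (pochOp (a - 1) k)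

/-- Differentiation as an endomorphism of `ℝ[X]`. -/
noncomputable def Dlm : Module.End ℝ ℝ[X] := (Polynomial.derivative : ℝ[X] →ₗ[ℝ] ℝ[X])

/-- The maximal deficiency operator `K_{rj} = (1/(r−j)!)·(n−j−xD)_{r−j} ∘ D^j`. -/
noncomputable def Kop (n r j : ℕ) : ℝ[X] →ₗ[ℝ] ℝ[X] :=
  (((r - j).factorial : ℝ))⁻¹ • ((pochOp ((n : ℤ) - j) (r - j)).comp (Dlm ^ j))

lemma xD_X_pow (s : ℕ) : xD (X ^ s : ℝ[X]) = (s : ℝ) • X ^ s := by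
  simp [xD, derivative_X_pow, smul_eq_C_mul]
  cases s with
  | zero => simp
  | succ t => rw [Nat.add_sub_cancel, pow_succ]; ring

lemma pochOp_X_pow (k : ℕ) (a : ℤ) (s : ℕ) :
    pochOp a k (X ^ s : ℝ[X]) = (∏ i ∈ Finset.range k, ((a : ℝ) - i - s)) • X ^ s := by
  induction k generalizing a with
  | zero => simp [pochOp]
  | succ k ih =>
      rw [pochOp]
      simp only [LinearMap.comp_apply, ih]
      rw [map_smul]
      simp only [LinearMap.sub_apply, LinearMap.smul_apply, LinearMap.id_apply, xD_X_pow]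
      rw [Finset.prod_range_succ' (fun i => ((a:ℝ) - i - s))]
      push_cast
      rw [← sub_smul, smul_smul]
      have : ∏ x ∈ Finset.range k, ((a:ℝ) - 1 - x - s) =
          ∏ x ∈ Finset.range k, ((a:ℝ) - (x + 1) - s) := by
        refine Finset.prod_congr rfl fun x _ => by ring
      rw [this]
      congr 1
      ring

lemma Dpow_X_pow (j s : ℕ) :
    (Dlm ^ j) (X ^ s : ℝ[X]) = (s.descFactorial j : ℝ) • X ^ (s - j) := by
  rw [Dlm, Module.End.pow_apply, iterate_derivative_X_pow_eq_smul]

noncomputable def Kc (n r j s : ℕ) : ℝ :=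
  (((r - j).factorial : ℝ))⁻¹ * (s.descFactorial j : ℝ) *
    ∏ i ∈ Finset.range (r - j), ((n : ℝ) - s - i)

lemma Kop_X_pow (n r j s : ℕ) :
    Kop n r j (X ^ s : ℝ[X]) = Kc n r j s • X ^ (s - j) := by
  rw [Kop]
  simp only [LinearMap.smul_apply, LinearMap.comp_apply, Dpow_X_pow, map_smul, pochOp_X_pow]
  rw [Kc, smul_smul, smul_smul]
  rcases le_or_gt j s with h | h
  · have hc : ((s - j : ℕ) : ℝ) = (s : ℝ) - j := by
      push_cast [h]; ring
    rw [hc]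
    have hp : ∏ i ∈ Finset.range (r - j), ((((n:ℤ) - j : ℤ) : ℝ) - i - ((s:ℝ) - j)) =
        ∏ i ∈ Finset.range (r - j), ((n:ℝ) - s - i) :=
      Finset.prod_congr rfl fun x _ => by push_cast; ring
    rw [hp]
  · rw [Nat.descFactorial_eq_zero_iff_lt.2 h]
    simp

lemma Kc_ne_zero_diag (n r j : ℕ) (hj : j ≤ r) (hrn : r ≤ n) : Kc n r j (n - r + j) ≠ 0 := by
  rw [Kc]
  refine mul_ne_zero (mul_ne_zero ?_ ?_) ?_
  · exact inv_ne_zero (Nat.cast_ne_zero.2 (Nat.factorial_ne_zero _))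
  · exact Nat.cast_ne_zero.2 (by rw [ne_eq, Nat.descFactorial_eq_zero_iff_lt]; omega)
  · rw [Finset.prod_ne_zero_iff]
    intro i hi
    rw [Finset.mem_range] at hi
    have h1 : ((n - r + j : ℕ) : ℝ) = (n : ℝ) - r + j := by
      push_cast [Nat.cast_sub hrn]; ring
    rw [h1]
    have h2 : (i : ℝ) + j < r := by exact_mod_cast (by omega : i + j < r)
    intro h0; linarith

lemma Kc_ne_zero_low (n r j : ℕ) (hj : j ≤ r) (hrn : r ≤ n) : Kc n r j j ≠ 0 := by
  rw [Kc]
  refine mul_ne_zero (mul_ne_zero ?_ ?_) ?_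
  · exact inv_ne_zero (Nat.cast_ne_zero.2 (Nat.factorial_ne_zero _))
  · exact Nat.cast_ne_zero.2 (by rw [ne_eq, Nat.descFactorial_eq_zero_iff_lt]; omega)
  · rw [Finset.prod_ne_zero_iff]
    intro i hi
    rw [Finset.mem_range] at hi
    have h2 : (i : ℝ) + j < n := by exact_mod_cast (by omega : i + j < n)
    intro h0; linarith

lemma Kc_zero_hi (n r j j0 : ℕ) (hj : j < j0) (hj0 : j0 ≤ r) (hrn : r ≤ n) :
    Kc n r j (n - r + j0) = 0 := by
  rw [Kc]
  rw [Finset.prod_eq_zero (Finset.mem_range.2 (by omega : r - j0 < r - j))]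
  · rw [mul_zero]
  · have h1 : ((n - r + j0 : ℕ) : ℝ) = (n : ℝ) - r + j0 := by
      push_cast [Nat.cast_sub hrn]; ring
    have h2 : ((r - j0 : ℕ) : ℝ) = (r : ℝ) - j0 := by
      push_cast [Nat.cast_sub hj0]; ring
    rw [h1, h2]; ring

lemma Kc_zero_lt (n r j s : ℕ) (h : s < j) : Kc n r j s = 0 := by
  simp [Kc, Nat.descFactorial_eq_zero_iff_lt.2 h]

lemma apply_mem_of_monomials {N : Submodule ℝ ℝ[X]} {T : ℝ[X] →ₗ[ℝ] ℝ[X]} {n : ℕ}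
    (h : ∀ s ≤ n, T (X ^ s) ∈ N) {f : ℝ[X]} (hf : f ∈ degreeLE ℝ (n : WithBot ℕ)) :
    T f ∈ N := by
  rcases eq_or_ne f 0 with rfl | hf0
  · simpa using N.zero_mem
  have hd : f.natDegree < n + 1 := by
    have := (Polynomial.mem_degreeLE).1 hf
    have := Polynomial.natDegree_le_iff_degree_le.2 this
    omega
  have hrepr := Polynomial.as_sum_range' f (n + 1) hd
  rw [hrepr, map_sum]
  apply N.sum_mem
  intro i hi
  rw [Finset.mem_range] at hi
  rw [← Polynomial.smul_X_eq_monomial, map_smul]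
  exact N.smul_mem _ (h i (by omega))

lemma Kop_monomial_mem (n r j : ℕ) (hj : j ≤ r) (hrn : r ≤ n) (s : ℕ) (hs : s ≤ n) :
    Kop n r j (X ^ s) ∈ degreeLE ℝ ((n - r : ℕ) : WithBot ℕ) := by
  rw [Kop_X_pow]
  by_cases hK : Kc n r j s = 0
  · rw [hK, zero_smul]; exact Submodule.zero_mem _
  · have hdesc : j ≤ s := by
      by_contra hlt
      exact hK (Kc_zero_lt n r j s (by omega))
    have hsub : s - j ≤ n - r := by
      by_contra hgt
      apply hK
      rw [Kc]
      rw [Finset.prod_eq_zero (Finset.mem_range.2 (by omega : n - s < r - j))]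
      · rw [mul_zero]
      · have : ((n - s : ℕ) : ℝ) = (n : ℝ) - s := by
          push_cast [Nat.cast_sub hs]; ring
        rw [this]; ring
    rw [Polynomial.mem_degreeLE]
    refine le_trans (Polynomial.degree_smul_le _ _) ?_
    refine le_trans (Polynomial.degree_X_pow_le _) ?_
    exact_mod_cast Nat.cast_le.2 hsub

lemma Kop_mem (n r j : ℕ) (hj : j ≤ r) (hrn : r ≤ n) {f : ℝ[X]}
    (hf : f ∈ degreeLE ℝ (n : WithBot ℕ)) :
    Kop n r j f ∈ degreeLE ℝ ((n - r : ℕ) : WithBot ℕ) :=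
  apply_mem_of_monomials (fun s hs => Kop_monomial_mem n r j hj hrn s hs) hf

lemma X_mul_derivative (t : ℕ) (g : ℝ[X]) :
    (X : ℝ[X]) * derivative (X ^ t * g) =
      (t : ℝ[X]) * (X ^ t * g) + X ^ (t + 1) * derivative g := by
  cases t with
  | zero => simp
  | succ u =>
      rw [derivative_mul, derivative_X_pow, Nat.add_sub_cancel, C_eq_natCast]
      push_cast
      ring

lemma Dlm_pow_succ (t : ℕ) (f : ℝ[X]) :
    derivative ((Dlm ^ t) f) = (Dlm ^ (t + 1)) f := by
  rw [pow_succ']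
  rfl

lemma pochOp_expand (k : ℕ) : ∀ a : ℤ, ∃ c : ℕ → ℝ,
    c 0 = (∏ i ∈ Finset.range k, ((a : ℝ) - i)) ∧ (∀ t, k < t → c t = 0) ∧
    ∀ f : ℝ[X], pochOp a k f =
      ∑ t ∈ Finset.range (k + 1), c t • ((X : ℝ[X]) ^ t * (Dlm ^ t) f) := by
  induction k with
  | zero =>
      intro a
      refine ⟨fun t => if t = 0 then 1 else 0, by simp, fun t ht => by simp only [if_neg (by omega : ¬ t = 0)], ?_⟩
      intro f
      simp [pochOp]
  | succ k ih =>
      intro a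
      obtain ⟨c, hc0, hctop, hc⟩ := ih (a - 1)
      refine ⟨fun t => ((a : ℝ) - t) * c t - (if t = 0 then 0 else c (t - 1)), ?_, ?_, ?_⟩
      · simp only [if_pos rfl, Nat.cast_zero, sub_zero]
        rw [hc0, Finset.prod_range_succ' (fun i => ((a : ℝ) - i))]
        push_cast
        ring_nf
      · intro t ht
        have h1 : c t = 0 := hctop t (by omega)
        have h2 : c (t - 1) = 0 := hctop (t - 1) (by omega)
        simp [h1, h2]
      · intro f
        rw [pochOp]
        simp only [LinearMap.comp_apply, LinearMap.sub_apply, LinearMap.smul_apply,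
          LinearMap.id_apply, hc]
        have hxD : xD (∑ t ∈ Finset.range (k + 1), c t • ((X : ℝ[X]) ^ t * (Dlm ^ t) f)) =
            ∑ t ∈ Finset.range (k + 1),
              c t • ((t : ℝ[X]) * ((X : ℝ[X]) ^ t * (Dlm ^ t) f)
                + (X : ℝ[X]) ^ (t + 1) * (Dlm ^ (t + 1)) f) := by
          rw [map_sum]
          refine Finset.sum_congr rfl fun t _ => ?_
          rw [map_smul]
          congr 1
          show (X : ℝ[X]) * derivative _ = _
          rw [X_mul_derivative, Dlm_pow_succ]
        rw [hxD, Finset.smul_sum, ← Finset.sum_sub_distrib]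
        have lhs_eq : ∑ t ∈ Finset.range (k + 1),
            ((a : ℝ) • (c t • ((X : ℝ[X]) ^ t * (Dlm ^ t) f)) -
              c t • ((t : ℝ[X]) * ((X : ℝ[X]) ^ t * (Dlm ^ t) f)
                + (X : ℝ[X]) ^ (t + 1) * (Dlm ^ (t + 1)) f)) =
            (∑ t ∈ Finset.range (k + 1), (((a : ℝ) - t) * c t) • ((X : ℝ[X]) ^ t * (Dlm ^ t) f))
            - ∑ t ∈ Finset.range (k + 1), c t • ((X : ℝ[X]) ^ (t + 1) * (Dlm ^ (t + 1)) f) := by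
          rw [← Finset.sum_sub_distrib]
          refine Finset.sum_congr rfl fun t _ => ?_
          have hnc : ((t : ℝ[X])) * ((X : ℝ[X]) ^ t * (Dlm ^ t) f) =
              (t : ℝ) • ((X : ℝ[X]) ^ t * (Dlm ^ t) f) := by
            rw [smul_eq_C_mul, C_eq_natCast]
          rw [hnc]
          module
        rw [lhs_eq]
        have rhs1 : ∑ t ∈ Finset.range (k + 2),
            ((((a : ℝ) - t) * c t - (if t = 0 then 0 else c (t - 1))) •
              ((X : ℝ[X]) ^ t * (Dlm ^ t) f)) =
            (∑ t ∈ Finset.range (k + 2), (((a : ℝ) - t) * c t) • ((X : ℝ[X]) ^ t * (Dlm ^ t) f))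
            - ∑ t ∈ Finset.range (k + 2),
                (if t = 0 then (0:ℝ) else c (t - 1)) • ((X : ℝ[X]) ^ t * (Dlm ^ t) f) := by
          rw [← Finset.sum_sub_distrib]
          exact Finset.sum_congr rfl fun t _ => by rw [sub_smul]
        have rhs2 : ∑ t ∈ Finset.range (k + 2),
            (((a : ℝ) - t) * c t) • ((X : ℝ[X]) ^ t * (Dlm ^ t) f) =
            ∑ t ∈ Finset.range (k + 1),
            (((a : ℝ) - t) * c t) • ((X : ℝ[X]) ^ t * (Dlm ^ t) f) := by
          rw [Finset.sum_range_succ, hctop (k + 1) (by omega)]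
          simp
        have rhs3 : ∑ t ∈ Finset.range (k + 2),
            (if t = 0 then (0:ℝ) else c (t - 1)) • ((X : ℝ[X]) ^ t * (Dlm ^ t) f) =
            ∑ t ∈ Finset.range (k + 1), c t • ((X : ℝ[X]) ^ (t + 1) * (Dlm ^ (t + 1)) f) := by
          rw [Finset.sum_range_succ' (fun t =>
            (if t = 0 then (0:ℝ) else c (t - 1)) • ((X : ℝ[X]) ^ t * (Dlm ^ t) f)) (k + 1)]
          simp
        rw [show k + 1 + 1 = k + 2 from rfl, rhs1, rhs2, rhs3]

noncomputable def Eop (q : ℝ[X]) (i : ℕ) : ℝ[X] →ₗ[ℝ] ℝ[X] :=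
  (LinearMap.mulLeft ℝ q).comp (Dlm ^ i)

lemma Eop_apply (q : ℝ[X]) (i : ℕ) (f : ℝ[X]) : Eop q i f = q * (Dlm ^ i) f := rfl

lemma Dlm_pow_iter (i : ℕ) (f : ℝ[X]) : (Dlm ^ i) f = derivative^[i] f := by
  rw [Dlm, Module.End.pow_apply]

lemma Kop_self (n r : ℕ) (f : ℝ[X]) : Kop n r r f = (Dlm ^ r) f := by
  rw [Kop, Nat.sub_self]
  simp [pochOp]

lemma Kop_expand (n r j : ℕ) (hj : j ≤ r) (hrn : r ≤ n) : ∃ c : ℕ → ℝ, c 0 ≠ 0 ∧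
    ∀ f : ℝ[X], Kop n r j f =
      ∑ t ∈ Finset.range (r - j + 1), c t • ((X : ℝ[X]) ^ t * (Dlm ^ (t + j)) f) := by
  obtain ⟨c, hc0, _, hc⟩ := pochOp_expand (r - j) ((n : ℤ) - j)
  refine ⟨fun t => (((r - j).factorial : ℝ))⁻¹ * c t, ?_, ?_⟩
  · apply mul_ne_zero (inv_ne_zero (Nat.cast_ne_zero.2 (Nat.factorial_ne_zero _)))
    rw [hc0, Finset.prod_ne_zero_iff]
    intro i hi
    rw [Finset.mem_range] at hi
    have h2 : (i : ℝ) + j < n := by exact_mod_cast (by omega : i + j < n)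
    push_cast
    intro h0; linarith
  · intro f
    rw [Kop]
    simp only [LinearMap.smul_apply, LinearMap.comp_apply, hc ((Dlm ^ j) f)]
    rw [Finset.smul_sum]
    refine Finset.sum_congr rfl fun t _ => ?_
    rw [smul_smul]
    congr 1
    rw [pow_add, Module.End.mul_apply]

noncomputable def Phi (n r : ℕ) : (Fin (r + 1) → ℝ[X]) →ₗ[ℝ] (ℝ[X] →ₗ[ℝ] ℝ[X]) where
  toFun p := ∑ j : Fin (r + 1), (LinearMap.mulLeft ℝ (p j)).comp (Kop n r (j : ℕ))
  map_add' p q := LinearMap.ext fun f => by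
    simp only [LinearMap.sum_apply, LinearMap.comp_apply, LinearMap.mulLeft_apply,
      Pi.add_apply, add_mul, Finset.sum_add_distrib, LinearMap.add_apply]
  map_smul' c p := LinearMap.ext fun f => by
    simp only [LinearMap.sum_apply, LinearMap.comp_apply, LinearMap.mulLeft_apply,
      Pi.smul_apply, smul_mul_assoc, RingHom.id_apply, LinearMap.smul_apply, Finset.smul_sum]

lemma Phi_apply (n r : ℕ) (p : Fin (r + 1) → ℝ[X]) (f : ℝ[X]) :
    Phi n r p f = ∑ j : Fin (r + 1), p j * Kop n r (j : ℕ) f := by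
  show (∑ j : Fin (r + 1), (LinearMap.mulLeft ℝ (p j)).comp (Kop n r (j : ℕ))) f = _
  simp only [LinearMap.sum_apply, LinearMap.comp_apply, LinearMap.mulLeft_apply]

lemma mulLeft_Kop_mem (n r : ℕ) (i : ℕ) (hi : i ≤ r) (q : ℝ[X]) :
    (LinearMap.mulLeft ℝ q).comp (Kop n r i) ∈ LinearMap.range (Phi n r) := by
  refine ⟨fun j => if j = (⟨i, by omega⟩ : Fin (r + 1)) then q else 0, ?_⟩
  refine LinearMap.ext fun f => ?_
  rw [Phi_apply]
  rw [Finset.sum_eq_single (⟨i, by omega⟩ : Fin (r + 1))]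
  · simp
  · intro b _ hb
    rw [if_neg hb, zero_mul]
  · intro h
    exact absurd (Finset.mem_univ _) h

lemma Eop_mem_range (n r : ℕ) (hrn : r ≤ n) :
    ∀ k i, i ≤ r → r ≤ i + k → ∀ q : ℝ[X], Eop q i ∈ LinearMap.range (Phi n r) := by
  intro k
  induction k with
  | zero =>
      intro i hi hri q
      have hir : i = r := by omega
      subst hir
      have : Eop q i = (LinearMap.mulLeft ℝ q).comp (Kop n i i) := by
        refine LinearMap.ext fun f => ?_
        rw [Eop_apply, LinearMap.comp_apply, LinearMap.mulLeft_apply, Kop_self]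
      rw [this]
      exact mulLeft_Kop_mem n i i hi q
  | succ k ihk =>
      intro i hi hri q
      by_cases hk : r ≤ i + k
      · exact ihk i hi hk q
      obtain ⟨c, hc0, hc⟩ := Kop_expand n r i hi hrn
      have key : Eop q i = (c 0)⁻¹ •
          ((LinearMap.mulLeft ℝ q).comp (Kop n r i)
            - ∑ t ∈ Finset.Ico 1 (r - i + 1), c t • Eop (q * X ^ t) (t + i)) := by
        refine LinearMap.ext fun f => ?_
        have expand : q * Kop n r i f =
            ∑ t ∈ Finset.range (r - i + 1), c t • (q * (X ^ t * (Dlm ^ (t + i)) f)) := by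
          rw [hc f, Finset.mul_sum]
          exact Finset.sum_congr rfl fun t _ => (mul_smul_comm _ _ _)
        have split : ∑ t ∈ Finset.range (r - i + 1), c t • (q * (X ^ t * (Dlm ^ (t + i)) f)) =
            c 0 • (q * (X ^ 0 * (Dlm ^ (0 + i)) f)) +
            ∑ t ∈ Finset.Ico 1 (r - i + 1), c t • (q * (X ^ t * (Dlm ^ (t + i)) f)) := by
          rw [Finset.range_eq_Ico, Finset.sum_eq_sum_Ico_succ_bot (by omega)]
        simp only [LinearMap.smul_apply, LinearMap.sub_apply, LinearMap.comp_apply,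
          LinearMap.mulLeft_apply, LinearMap.sum_apply, expand, split, Eop_apply]
        rw [zero_add, pow_zero, one_mul]
        have hsimp : ∑ x ∈ Finset.Ico 1 (r - i + 1), c x • (q * X ^ x * (Dlm ^ (x + i)) f) =
            ∑ x ∈ Finset.Ico 1 (r - i + 1), c x • (q * (X ^ x * (Dlm ^ (x + i)) f)) :=
          Finset.sum_congr rfl fun x _ => by rw [mul_assoc]
        rw [hsimp, add_sub_cancel_right, smul_smul, inv_mul_cancel₀ hc0, one_smul]
      rw [key]
      refine Submodule.smul_mem _ _ (Submodule.sub_mem _ (mulLeft_Kop_mem n r i hi q) ?_)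
      refine Submodule.sum_mem _ fun t ht => ?_
      rw [Finset.mem_Ico] at ht
      exact Submodule.smul_mem _ _ (ihk (t + i) (by omega) (by omega) _)

lemma bounds_of_maps (n r m : ℕ) (hm : m ≤ r) (hrn : r ≤ n) (p : Fin (r + 1) → ℝ[X])
    (hmap : ∀ f ∈ degreeLE ℝ (n : WithBot ℕ),
      (∑ j : Fin (r + 1), p j * Kop n r (j : ℕ) f) ∈ degreeLE ℝ ((n - m : ℕ) : WithBot ℕ)) :
    ∀ j : Fin (r + 1), p j ∈ degreeLE ℝ ((r - m : ℕ) : WithBot ℕ) := by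
  suffices H : ∀ t : ℕ, ∀ j : Fin (r + 1), r - (j : ℕ) ≤ t →
      degree (p j) ≤ ((r - m : ℕ) : WithBot ℕ) by
    exact fun j => Polynomial.mem_degreeLE.2 (H r j (by omega))
  intro t
  induction t using Nat.strong_induction_on with
  | _ t IH =>
    intro j hj
    rcases eq_or_ne (p j) 0 with hp0 | hp0
    · rw [hp0, degree_zero]; exact bot_le
    have hs : n - r + (j : ℕ) ≤ n := by have := j.isLt; omega
    have hX : (X : ℝ[X]) ^ (n - r + (j : ℕ)) ∈ degreeLE ℝ (n : WithBot ℕ) := by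
      rw [Polynomial.mem_degreeLE, degree_X_pow]
      exact_mod_cast Nat.cast_le.2 hs
    have hS := hmap _ hX
    -- identify the sum
    have hterm : ∀ j' : Fin (r + 1),
        p j' * Kop n r (j' : ℕ) (X ^ (n - r + (j : ℕ))) =
        p j' * (Kc n r (j' : ℕ) (n - r + (j : ℕ)) • X ^ (n - r + (j : ℕ) - (j' : ℕ))) := by
      intro j'
      rw [Kop_X_pow]
    rw [Finset.sum_congr rfl fun j' _ => hterm j'] at hS
    rw [← Finset.add_sum_erase _ _ (Finset.mem_univ j)] at hS
    have hrest : ∀ j' ∈ Finset.univ.erase j,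
        p j' * (Kc n r (j' : ℕ) (n - r + (j : ℕ)) • X ^ (n - r + (j : ℕ) - (j' : ℕ)))
          ∈ degreeLE ℝ ((n - m : ℕ) : WithBot ℕ) := by
      intro j' hj'
      have hne : j' ≠ j := Finset.ne_of_mem_erase hj'
      rcases lt_or_gt_of_ne (fun h : (j' : ℕ) = (j : ℕ) => hne (Fin.ext h)) with hlt | hgt
      · rw [Kc_zero_hi n r (j' : ℕ) (j : ℕ) hlt (by have := j.isLt; omega) hrn]
        simp only [zero_smul, mul_zero]
        exact Submodule.zero_mem _
      · -- j' > j : use IH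
        have hbound : degree (p j') ≤ ((r - m : ℕ) : WithBot ℕ) :=
          IH (r - (j' : ℕ)) (by omega) j' (le_refl _)
        rw [Polynomial.mem_degreeLE]
        refine le_trans (degree_mul_le _ _) ?_
        have h2 : degree (Kc n r (j' : ℕ) (n - r + (j : ℕ)) •
            (X : ℝ[X]) ^ (n - r + (j : ℕ) - (j' : ℕ))) ≤
            ((n - r + (j : ℕ) - (j' : ℕ) : ℕ) : WithBot ℕ) := by
          refine le_trans (degree_smul_le _ _) ?_
          rw [degree_X_pow]
        have hle : (r - m) + (n - r + (j : ℕ) - (j' : ℕ)) ≤ n - m := by omega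
        refine le_trans (add_le_add hbound h2) ?_
        rw [← Nat.cast_add]
        exact_mod_cast hle
    have hsum : (∑ j' ∈ Finset.univ.erase j,
        p j' * (Kc n r (j' : ℕ) (n - r + (j : ℕ)) • X ^ (n - r + (j : ℕ) - (j' : ℕ))))
          ∈ degreeLE ℝ ((n - m : ℕ) : WithBot ℕ) :=
      Submodule.sum_mem _ hrest
    have hmain : p j * (Kc n r (j : ℕ) (n - r + (j : ℕ)) • X ^ (n - r + (j : ℕ) - (j : ℕ)))
        ∈ degreeLE ℝ ((n - m : ℕ) : WithBot ℕ) := by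
      have := Submodule.sub_mem _ hS hsum
      simpa using this
    rw [Polynomial.mem_degreeLE] at hmain
    have hexp : n - r + (j : ℕ) - (j : ℕ) = n - r := by omega
    rw [hexp] at hmain
    have hKc : Kc n r (j : ℕ) (n - r + (j : ℕ)) ≠ 0 :=
      Kc_ne_zero_diag n r (j : ℕ) (by have := j.isLt; omega) hrn
    rw [smul_eq_C_mul, degree_mul, degree_C_mul hKc, degree_X_pow,
      degree_eq_natDegree hp0] at hmain
    rw [degree_eq_natDegree hp0]
    have h9 : (p j).natDegree + (n - r) ≤ n - m := by
      rw [← Nat.cast_add] at hmain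
      exact_mod_cast hmain
    have h10 : (p j).natDegree ≤ r - m := by omega
    exact_mod_cast h10

lemma Phi_ker_zero (n r : ℕ) (hrn : r ≤ n) (p : Fin (r + 1) → ℝ[X])
    (h : ∀ f : ℝ[X], ∑ j : Fin (r + 1), p j * Kop n r (j : ℕ) f = 0) : p = 0 := by
  suffices H : ∀ t : ℕ, ∀ j : Fin (r + 1), (j : ℕ) ≤ t → p j = 0 by
    funext j; exact H r j (by have := j.isLt; omega)
  intro t
  induction t using Nat.strong_induction_on with
  | _ t IH =>
    intro j hj
    have hs := h (X ^ (j : ℕ))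
    have hterm : ∀ j' : Fin (r + 1),
        p j' * Kop n r (j' : ℕ) (X ^ (j : ℕ)) =
        p j' * (Kc n r (j' : ℕ) (j : ℕ) • X ^ ((j : ℕ) - (j' : ℕ))) := by
      intro j'; rw [Kop_X_pow]
    rw [Finset.sum_congr rfl fun j' _ => hterm j'] at hs
    rw [Finset.sum_eq_single j] at hs
    · have hKc : Kc n r (j : ℕ) (j : ℕ) ≠ 0 :=
        Kc_ne_zero_low n r (j : ℕ) (by have := j.isLt; omega) hrn
      rw [Nat.sub_self, pow_zero, smul_eq_C_mul, mul_one] at hs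
      rcases mul_eq_zero.1 hs with h1 | h2
      · exact h1
      · exact absurd (by rwa [Polynomial.C_eq_zero] at h2) hKc
    · intro j' _ hne
      rcases lt_or_gt_of_ne (fun hh : (j' : ℕ) = (j : ℕ) => hne (Fin.ext hh)) with hlt' | hgt'
      · rw [IH (t - 1) (by omega) j' (by omega), zero_mul]
      · rw [Kc_zero_lt n r (j' : ℕ) (j : ℕ) hgt', zero_smul, mul_zero]
    · intro hnm; exact absurd (Finset.mem_univ _) hnm

noncomputable def Psi (r : ℕ) : (ℕ → ℝ[X]) →ₗ[ℝ] (ℝ[X] →ₗ[ℝ] ℝ[X]) where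
  toFun a := ∑ i ∈ Finset.range (r + 1), (LinearMap.mulLeft ℝ (a i)).comp (Dlm ^ i)
  map_add' a b := LinearMap.ext fun f => by
    simp only [LinearMap.sum_apply, LinearMap.comp_apply, LinearMap.mulLeft_apply,
      Pi.add_apply, add_mul, Finset.sum_add_distrib, LinearMap.add_apply]
  map_smul' c a := LinearMap.ext fun f => by
    simp only [LinearMap.sum_apply, LinearMap.comp_apply, LinearMap.mulLeft_apply,
      Pi.smul_apply, smul_mul_assoc, RingHom.id_apply, LinearMap.smul_apply, Finset.smul_sum]

lemma Psi_def (r : ℕ) (a : ℕ → ℝ[X]) :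
    Psi r a = ∑ i ∈ Finset.range (r + 1), (LinearMap.mulLeft ℝ (a i)).comp (Dlm ^ i) := rfl

lemma sum_a_eq (r : ℕ) (a : ℕ → ℝ[X]) (f : ℝ[X]) :
    (∑ i ∈ Finset.range (r + 1), a i * derivative^[i] f) = Psi r a f := by
  rw [Psi_def]
  simp only [LinearMap.sum_apply, LinearMap.comp_apply, LinearMap.mulLeft_apply]
  exact Finset.sum_congr rfl fun i _ => by rw [Dlm_pow_iter]

lemma Eop_mem_Psi (r i : ℕ) (hi : i ≤ r) (q : ℝ[X]) : Eop q i ∈ LinearMap.range (Psi r) := by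
  refine ⟨fun i' => if i' = i then q else 0, ?_⟩
  refine LinearMap.ext fun f => ?_
  rw [Psi_def]
  simp only [LinearMap.sum_apply, LinearMap.comp_apply, LinearMap.mulLeft_apply]
  rw [Finset.sum_eq_single_of_mem i (Finset.mem_range.2 (by omega))]
  · rw [if_pos rfl, Eop_apply]
  · intro b _ hb
    rw [if_neg hb, zero_mul]

lemma mulLeft_Kop_mem_Psi (n r j : ℕ) (hj : j ≤ r) (hrn : r ≤ n) (q : ℝ[X]) :
    (LinearMap.mulLeft ℝ q).comp (Kop n r j) ∈ LinearMap.range (Psi r) := by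
  obtain ⟨c, hc0, hc⟩ := Kop_expand n r j hj hrn
  have key : (LinearMap.mulLeft ℝ q).comp (Kop n r j) =
      ∑ t ∈ Finset.range (r - j + 1), c t • Eop (q * X ^ t) (t + j) := by
    refine LinearMap.ext fun f => ?_
    simp only [LinearMap.comp_apply, LinearMap.mulLeft_apply, hc f, Finset.mul_sum,
      LinearMap.sum_apply, LinearMap.smul_apply, Eop_apply]
    exact Finset.sum_congr rfl fun t _ => by rw [mul_smul_comm, mul_assoc]
  rw [key]
  refine Submodule.sum_mem _ fun t ht => ?_
  rw [Finset.mem_range] at ht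
  exact Submodule.smul_mem _ _ (Eop_mem_Psi r (t + j) (by omega) _)

lemma Phi_mem_Psi (n r : ℕ) (hrn : r ≤ n) (p : Fin (r + 1) → ℝ[X]) :
    Phi n r p ∈ LinearMap.range (Psi r) := by
  have : Phi n r p = ∑ j : Fin (r + 1), (LinearMap.mulLeft ℝ (p j)).comp (Kop n r (j : ℕ)) := rfl
  rw [this]
  exact Submodule.sum_mem _ fun j _ =>
    mulLeft_Kop_mem_Psi n r (j : ℕ) (by have := j.isLt; omega) hrn (p j)

lemma term_mem (n r m j : ℕ) (hm : m ≤ r) (hrn : r ≤ n) (hj : j ≤ r) {q f : ℝ[X]}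
    (hq : q ∈ degreeLE ℝ ((r - m : ℕ) : WithBot ℕ))
    (hf : f ∈ degreeLE ℝ (n : WithBot ℕ)) :
    q * Kop n r j f ∈ degreeLE ℝ ((n - m : ℕ) : WithBot ℕ) := by
  have hK := Kop_mem n r j hj hrn hf
  rw [Polynomial.mem_degreeLE] at hq hK ⊢
  refine le_trans (degree_mul_le _ _) (le_trans (add_le_add hq hK) ?_)
  rw [← Nat.cast_add]
  exact_mod_cast (by omega : (r - m) + (n - r) ≤ n - m)

lemma exists_decomp_fin (n r m : ℕ) (hm : m ≤ r) (hrn : r ≤ n) (a : ℕ → ℝ[X])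
    (hmaps : ∀ f ∈ degreeLE ℝ (n : WithBot ℕ),
      (∑ i ∈ Finset.range (r + 1), a i * derivative^[i] f) ∈
        degreeLE ℝ ((n - m : ℕ) : WithBot ℕ)) :
    ∃ p : Fin (r + 1) → ℝ[X], (∀ j, p j ∈ degreeLE ℝ ((r - m : ℕ) : WithBot ℕ)) ∧
      ∀ f : ℝ[X], (∑ i ∈ Finset.range (r + 1), a i * derivative^[i] f) =
        ∑ j : Fin (r + 1), p j * Kop n r (j : ℕ) f := by
  have hL : Psi r a ∈ LinearMap.range (Phi n r) := by
    rw [Psi_def]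
    exact Submodule.sum_mem _ fun i hi =>
      Eop_mem_range n r hrn r i (by rw [Finset.mem_range] at hi; omega) (by omega) (a i)
  obtain ⟨p, hp⟩ := hL
  have heq : ∀ f : ℝ[X], (∑ i ∈ Finset.range (r + 1), a i * derivative^[i] f) =
      ∑ j : Fin (r + 1), p j * Kop n r (j : ℕ) f := by
    intro f
    rw [sum_a_eq, ← hp, Phi_apply]
  refine ⟨p, ?_, heq⟩
  exact bounds_of_maps n r m hm hrn p (fun f hf => by rw [← heq f]; exact hmaps f hf)

/-- For `m ≤ r ≤ n`: an operator `L[f] = ∑_{i=0}^r a_i(x) f^{(i)}`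
maps `P_n` into `P_{n−m}` iff `L = ∑_{j=0}^r p_j(x)·K_{rj}` with `deg p_j ≤ r−m`, the
`p_j` being uniquely determined; consequently the space of such operators has dimension
`(r+1)(r−m+1)` (in particular `(r+1)²` when `m = 0`). -/
theorem operator_decomposition_deficiency_m (n r m : ℕ) (hm : m ≤ r) (hrn : r ≤ n) :
    (∀ a : ℕ → ℝ[X],
      ((∀ f ∈ degreeLE ℝ (n : WithBot ℕ),
          (∑ i ∈ Finset.range (r + 1), a i * derivative^[i] f) ∈
            degreeLE ℝ ((n - m : ℕ) : WithBot ℕ)) ↔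
        (∃ p : ℕ → ℝ[X], (∀ j ≤ r, p j ∈ degreeLE ℝ ((r - m : ℕ) : WithBot ℕ)) ∧
          ∀ f : ℝ[X], (∑ i ∈ Finset.range (r + 1), a i * derivative^[i] f) =
            ∑ j ∈ Finset.range (r + 1), p j * Kop n r j f)) ∧
      ((∀ f ∈ degreeLE ℝ (n : WithBot ℕ),
          (∑ i ∈ Finset.range (r + 1), a i * derivative^[i] f) ∈
            degreeLE ℝ ((n - m : ℕ) : WithBot ℕ)) →
        ∃! p : Fin (r + 1) → ℝ[X],
          (∀ j : Fin (r + 1), p j ∈ degreeLE ℝ ((r - m : ℕ) : WithBot ℕ)) ∧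
          ∀ f : ℝ[X], (∑ i ∈ Finset.range (r + 1), a i * derivative^[i] f) =
            ∑ j : Fin (r + 1), p j * Kop n r (j : ℕ) f)) ∧
    Module.finrank ℝ
      (Submodule.span ℝ {L : ℝ[X] →ₗ[ℝ] ℝ[X] |
        (∃ a : ℕ → ℝ[X], L = ∑ i ∈ Finset.range (r + 1),
          (LinearMap.mulLeft ℝ (a i)).comp (Dlm ^ i)) ∧
        ∀ f ∈ degreeLE ℝ (n : WithBot ℕ),
          L f ∈ degreeLE ℝ ((n - m : ℕ) : WithBot ℕ)}) = (r + 1) * (r - m + 1) := by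
  
  constructor
  · intro a
    constructor
    · constructor
      · intro hmaps
        obtain ⟨p, hb, heq⟩ := exists_decomp_fin n r m hm hrn a hmaps
        refine ⟨fun j => if h : j < r + 1 then p ⟨j, h⟩ else 0, ?_, ?_⟩
        · intro j hj
          have hjlt : j < r + 1 := by omega
          simp only [dif_pos hjlt]
          exact hb _
        · intro f
          rw [heq f, ← Fin.sum_univ_eq_sum_range
            (fun j => (if h : j < r + 1 then p ⟨j, h⟩ else 0) * Kop n r j f) (r + 1)]
          exact Finset.sum_congr rfl fun j _ => by rw [dif_pos j.isLt]
      · rintro ⟨p, hb, heq⟩ f hf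
        rw [heq f]
        refine Submodule.sum_mem _ fun j hj => ?_
        rw [Finset.mem_range] at hj
        exact term_mem n r m j hm hrn (by omega) (hb j (by omega)) hf
    · intro hmaps
      obtain ⟨p, hb, heq⟩ := exists_decomp_fin n r m hm hrn a hmaps
      refine ⟨p, ⟨hb, heq⟩, ?_⟩
      rintro p' ⟨hb', heq'⟩
      have hz : ∀ f : ℝ[X], ∑ j : Fin (r + 1), (p' - p) j * Kop n r (j : ℕ) f = 0 := by
        intro f
        simp only [Pi.sub_apply, sub_mul, Finset.sum_sub_distrib]
        rw [← heq f, ← heq' f, sub_self]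
      have := Phi_ker_zero n r hrn (p' - p) hz
      exact sub_eq_zero.1 this
  · -- finrank part
    set V : Submodule ℝ ℝ[X] := degreeLE ℝ ((r - m : ℕ) : WithBot ℕ) with hV
    set ι : (Fin (r + 1) → V) →ₗ[ℝ] (Fin (r + 1) → ℝ[X]) :=
      LinearMap.pi (fun j => V.subtype.comp (LinearMap.proj j)) with hι
    set Φ' : (Fin (r + 1) → V) →ₗ[ℝ] (ℝ[X] →ₗ[ℝ] ℝ[X]) := (Phi n r).comp ι with hΦ'
    have hι_apply : ∀ (p : Fin (r + 1) → V) (j : Fin (r + 1)), ι p j = (p j : ℝ[X]) := by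
      intro p j; rfl
    have hinj : Function.Injective Φ' := by
      intro p₁ p₂ hps
      have hz : Phi n r (ι (p₁ - p₂)) = 0 := by
        have h0 : Φ' (p₁ - p₂) = 0 := by rw [map_sub, hps, sub_self]
        exact h0
      have hker : ι (p₁ - p₂) = 0 := by
        refine Phi_ker_zero n r hrn _ fun f => ?_
        rw [← Phi_apply, hz, LinearMap.zero_apply]
      have : p₁ - p₂ = 0 := by
        funext j
        have := congrFun hker j
        rw [hι_apply] at this
        exact Subtype.ext (by simpa using this)
      exact sub_eq_zero.1 this
    have hset : {L : ℝ[X] →ₗ[ℝ] ℝ[X] |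
        (∃ a : ℕ → ℝ[X], L = ∑ i ∈ Finset.range (r + 1),
          (LinearMap.mulLeft ℝ (a i)).comp (Dlm ^ i)) ∧
        ∀ f ∈ degreeLE ℝ (n : WithBot ℕ),
          L f ∈ degreeLE ℝ ((n - m : ℕ) : WithBot ℕ)} = ↑(LinearMap.range Φ') := by
      ext L
      constructor
      · rintro ⟨⟨a, rfl⟩, hmapsL⟩
        have hmaps : ∀ f ∈ degreeLE ℝ (n : WithBot ℕ),
            (∑ i ∈ Finset.range (r + 1), a i * derivative^[i] f) ∈
              degreeLE ℝ ((n - m : ℕ) : WithBot ℕ) := by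
          intro f hf
          rw [sum_a_eq]
          exact hmapsL f hf
        obtain ⟨p, hb, heq⟩ := exists_decomp_fin n r m hm hrn a hmaps
        refine ⟨fun j => ⟨p j, hb j⟩, ?_⟩
        refine LinearMap.ext fun f => ?_
        rw [LinearMap.comp_apply, Phi_apply]
        have : ∑ j : Fin (r + 1), (ι fun j => (⟨p j, hb j⟩ : V)) j * Kop n r (j : ℕ) f =
            ∑ j : Fin (r + 1), p j * Kop n r (j : ℕ) f :=
          Finset.sum_congr rfl fun j _ => by rw [hι_apply]
        rw [this, ← heq f, sum_a_eq, Psi_def]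
      · rintro ⟨pv, rfl⟩
        constructor
        · obtain ⟨a, ha⟩ := Phi_mem_Psi n r hrn (ι pv)
          exact ⟨a, by rw [LinearMap.comp_apply, ← ha, Psi_def]⟩
        · intro f hf
          rw [LinearMap.comp_apply, Phi_apply]
          refine Submodule.sum_mem _ fun j _ => ?_
          rw [hι_apply]
          exact term_mem n r m (j : ℕ) hm hrn (by have := j.isLt; omega) (pv j).2 hf
    rw [hset, Submodule.span_eq, LinearMap.finrank_range_of_inj hinj]
    have hVLT : V = degreeLT ℝ (r - m + 1) := degreeLT_succ_eq_degreeLE.symm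
    haveI : Module.Finite ℝ V := by
      rw [hVLT]
      exact Module.Finite.equiv (degreeLTEquiv ℝ (r - m + 1)).symm
    have hVrank : Module.finrank ℝ V = r - m + 1 := by
      rw [hVLT, (degreeLTEquiv ℝ (r - m + 1)).finrank_eq, Module.finrank_pi, Fintype.card_fin]
    rw [Module.finrank_pi_fintype]
    simp only [hVrank]
    rw [Finset.sum_const, Finset.card_univ, Fintype.card_fin, smul_eq_mul]
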